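/- Let f be a measurable function on a cube Q⁰ ⊂ ℝ^d with dyadic children ch(Q) for each Q ∈ 𝒟(Q⁰), let λ = 2^{−d−2}, set f₀ := f − m_f(Q⁰), and let {Q¹_j} be the maximal dyadic subcubes of Q⁰ such that max over children Q' of Q¹_j of |m_f(Q') − m_f(Q⁰)| exceeds (1_{Q⁰} f₀)*(λ|Q⁰|). Then ∑_j |Q¹_j| ≤ |Q⁰|/2. -/

import Mathlib

open MeasureTheory ENNReal

/-- The dyadic subcube of generation `n`, position `m` (with `m i < 2^n`) of the cube
with lower corner `a` and side `l`. For `n = 0`, `m = 0` this is the cube itself. -/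
def subCube (d : ℕ) (a : Fin d → ℝ) (l : ℝ) (n : ℕ) (m : Fin d → ℕ) :
    Set (Fin d → ℝ) :=
  {x | ∀ i, a i + (m i : ℝ) * l / 2 ^ n ≤ x i ∧
      x i < a i + ((m i : ℝ) + 1) * l / 2 ^ n}

/-- `c` is a median of `f` on `Q` (Lebesgue measure). -/
def IsMedian {d : ℕ} (f : (Fin d → ℝ) → ℝ) (Q : Set (Fin d → ℝ)) (c : ℝ) : Prop :=
  volume (Q ∩ {x | c < f x}) ≤ volume Q / 2 ∧
    volume (Q ∩ {x | f x < c}) ≤ volume Q / 2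

/-- Decreasing rearrangement `g*(t) = inf {α ≥ 0 : |{|g| > α}| ≤ t}`, in `ℝ≥0∞`. -/
noncomputable def rearr {d : ℕ} (g : (Fin d → ℝ) → ℝ) (t : ℝ≥0∞) : ℝ≥0∞ :=
  sInf {α : ℝ≥0∞ | volume {x | α < ENNReal.ofReal |g x|} ≤ t}

/-!
Each selected cube `Q` has a child `Q'` whose median `c'` satisfies `|c' - m_f(Q⁰)| > thr`.
On at least half of `Q'`, hence on a `2^{-d-1}` fraction of `Q`, the function `f` lies beyond
`c'` as seen from `m_f(Q⁰)`, so `|1_{Q⁰} f₀| > thr` there. The selected cubes are maximal, hence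
disjoint, and the set `{|1_{Q⁰} f₀| > thr}` has measure at most `λ|Q⁰|` because the infimum
defining the rearrangement is attained. So `∑ |Q¹_j| ≤ 2^{d+1} λ |Q⁰| = |Q⁰|/2`.
-/

open Set Function

lemma measure_sInf_lt_le {X : Type*} [MeasurableSpace X] (μ : Measure X) (h : X → ℝ≥0∞)
    (t : ℝ≥0∞) : μ {x | sInf {α | μ {x | α < h x} ≤ t} < h x} ≤ t := by
  set A := {α | μ {x | α < h x} ≤ t}
  have hA : A.Nonempty := ⟨∞, by simp [A]⟩
  obtain ⟨u, hu_anti, hu_lim, hu_mem⟩ := exists_seq_tendsto_sInf hA (OrderBot.bddBelow A)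
  have hcover : {x | sInf A < h x} ⊆ ⋃ n, {x | u n < h x} := fun x hx =>
    mem_iUnion.mpr (hu_lim.eventually (gt_mem_nhds hx)).exists
  have hmono : Monotone fun n => {x | u n < h x} := fun i j hij x hx =>
    (hu_anti hij).trans_lt hx
  calc μ {x | sInf A < h x} ≤ μ (⋃ n, {x | u n < h x}) := measure_mono hcover
    _ = ⨆ n, μ {x | u n < h x} := hmono.measure_iUnion
    _ ≤ t := iSup_le hu_mem

lemma volume_rearr_lt_le {d : ℕ} (g : (Fin d → ℝ) → ℝ) (t : ℝ≥0∞) :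
    volume {x | rearr g t < ENNReal.ofReal |g x|} ≤ t :=
  measure_sInf_lt_le volume _ t

lemma measure_le_two_mul_inter {X : Type*} [MeasurableSpace X] {μ : Measure X} {Q A : Set X}
    (hQ : μ Q ≠ ∞) (hA : μ (Q \ A) ≤ μ Q / 2) : μ Q ≤ 2 * μ (Q ∩ A) := by
  have hhalf : μ Q / 2 ≤ μ (Q ∩ A) := by
    rw [← ENNReal.sub_half hQ, tsub_le_iff_right]
    exact (measure_le_inter_add_sdiff μ Q A).trans (by gcongr)
  calc μ Q = 2 * (μ Q / 2) := (ENNReal.mul_div_cancel two_ne_zero ofNat_ne_top).symm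
    _ ≤ 2 * μ (Q ∩ A) := by gcongr

lemma IsMedian.exists_subset_abs_sub_le {d : ℕ} {f : (Fin d → ℝ) → ℝ} {Q : Set (Fin d → ℝ)}
    {c : ℝ} (hc : IsMedian f Q c) (hf : Measurable f) (hQ : MeasurableSet Q)
    (hQfin : volume Q ≠ ∞) (b : ℝ) :
    ∃ E ⊆ Q, MeasurableSet E ∧ volume Q ≤ 2 * volume E ∧ ∀ x ∈ E, |c - b| ≤ |f x - b| := by
  rcases le_total b c with hbc | hcb
  · refine ⟨Q ∩ {x | c ≤ f x}, inter_subset_left,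
      hQ.inter (measurableSet_le measurable_const hf), ?_, fun x hx => ?_⟩
    · refine measure_le_two_mul_inter hQfin ((measure_mono ?_).trans hc.2)
      exact fun x hx => ⟨hx.1, show f x < c from not_le.mp hx.2⟩
    · rw [abs_of_nonneg (sub_nonneg.mpr hbc), abs_of_nonneg (by linarith [hx.2.out])]
      linarith [hx.2.out]
  · refine ⟨Q ∩ {x | f x ≤ c}, inter_subset_left,
      hQ.inter (measurableSet_le hf measurable_const), ?_, fun x hx => ?_⟩
    · refine measure_le_two_mul_inter hQfin ((measure_mono ?_).trans hc.1)
      exact fun x hx => ⟨hx.1, show c < f x from not_le.mp hx.2⟩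
    · rw [abs_of_nonpos (sub_nonpos.mpr hcb), abs_of_nonpos (by linarith [hx.2.out])]
      linarith [hx.2.out]

lemma tsum_measure_le_mul_measure_iUnion {X ι : Type*} [MeasurableSpace X] [Countable ι]
    {μ : Measure X} {Q E : ι → Set X} {C : ℝ≥0∞} (hQ : Pairwise (Disjoint on Q))
    (hEQ : ∀ i, E i ⊆ Q i) (hE : ∀ i, MeasurableSet (E i)) (hC : ∀ i, μ (Q i) ≤ C * μ (E i)) :
    ∑' i, μ (Q i) ≤ C * μ (⋃ i, E i) := by
  have hEdisj : Pairwise (Disjoint on E) := fun i j hij =>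
    (hQ hij).mono (hEQ i) (hEQ j)
  calc ∑' i, μ (Q i) ≤ ∑' i, C * μ (E i) := ENNReal.tsum_le_tsum hC
    _ = C * μ (⋃ i, E i) := by rw [ENNReal.tsum_mul_left, measure_iUnion hEdisj hE]

section DyadicCubes

variable {d : ℕ} {a : Fin d → ℝ} {l : ℝ}

lemma subCube_eq_pi (d : ℕ) (a : Fin d → ℝ) (l : ℝ) (n : ℕ) (m : Fin d → ℕ) :
    subCube d a l n m = univ.pi fun i =>
      Ico (a i + (m i : ℝ) * l / 2 ^ n) (a i + ((m i : ℝ) + 1) * l / 2 ^ n) := by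
  ext x; simp [subCube]

lemma measurableSet_subCube (n : ℕ) (m : Fin d → ℕ) : MeasurableSet (subCube d a l n m) := by
  rw [subCube_eq_pi]; exact MeasurableSet.univ_pi fun i => measurableSet_Ico

lemma volume_subCube (hl : 0 ≤ l) (n : ℕ) (m : Fin d → ℕ) :
    volume (subCube d a l n m) = ENNReal.ofReal ((l / 2 ^ n) ^ d) := by
  rw [subCube_eq_pi, volume_pi_pi, ENNReal.ofReal_pow (by positivity)]
  simp only [Real.volume_Ico]
  ring_nf
  simp

lemma volume_subCube_eq_two_pow_mul (hl : 0 ≤ l) (n : ℕ) (m m' : Fin d → ℕ) :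
    volume (subCube d a l n m) = 2 ^ d * volume (subCube d a l (n + 1) m') := by
  rw [volume_subCube hl, volume_subCube hl, ← ENNReal.ofReal_ofNat 2,
    ← ENNReal.ofReal_pow zero_le_two, ← ENNReal.ofReal_mul (by positivity), ← mul_pow]
  congr 2
  field_simp
  ring

lemma subCube_succ_subset (hl : 0 ≤ l) (n : ℕ) (m' : Fin d → ℕ) :
    subCube d a l (n + 1) m' ⊆ subCube d a l n fun i => m' i / 2 := by
  rw [subCube_eq_pi, subCube_eq_pi]
  refine pi_mono fun i _ => Ico_subset_Ico ?_ ?_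
  all_goals
    have hs : 0 ≤ l / 2 ^ (n + 1) := by positivity
    have e : ∀ r : ℝ, r * l / 2 ^ n = r * 2 * (l / 2 ^ (n + 1)) := fun r => by
      rw [pow_succ]; field_simp
    rw [e, mul_div_assoc, add_le_add_iff_left]
  · gcongr
    exact_mod_cast Nat.div_mul_le_self (m' i) 2
  · gcongr
    exact_mod_cast (by omega : m' i + 1 ≤ (m' i / 2 + 1) * 2)

lemma subCube_add_subset (hl : 0 ≤ l) (n k : ℕ) (m' : Fin d → ℕ) :
    subCube d a l (n + k) m' ⊆ subCube d a l n fun i => m' i / 2 ^ k := by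
  induction k generalizing m' with
  | zero => simp
  | succ k ih =>
    refine (subCube_succ_subset hl (n + k) m').trans ((ih _).trans_eq ?_)
    simp_rw [Nat.div_div_eq_div_mul, pow_succ']

lemma subCube_subset_subCube_zero (hl : 0 ≤ l) {n : ℕ} {m : Fin d → ℕ}
    (hm : ∀ i, m i < 2 ^ n) : subCube d a l n m ⊆ subCube d a l 0 fun _ => 0 := by
  simpa [Nat.div_eq_of_lt (hm _)] using subCube_add_subset (a := a) hl 0 n m

lemma eq_of_mem_subCube (hl : 0 < l) {n : ℕ} {m m' : Fin d → ℕ} {x : Fin d → ℝ}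
    (hm : x ∈ subCube d a l n m) (hm' : x ∈ subCube d a l n m') : m = m' := by
  have hs : 0 < l / 2 ^ n := by positivity
  have hle : ∀ p q : Fin d → ℕ, x ∈ subCube d a l n p → x ∈ subCube d a l n q →
      ∀ i, p i ≤ q i := by
    intro p q hp hq i
    have hlt : (p i : ℝ) * (l / 2 ^ n) < ((q i : ℝ) + 1) * (l / 2 ^ n) := by
      simp only [← mul_div_assoc]; linarith [(hp i).1, (hq i).2]
    exact Nat.lt_succ_iff.mp (by exact_mod_cast lt_of_mul_lt_mul_right hlt hs.le)
  exact funext fun i => le_antisymm (hle m m' hm hm' i) (hle m' m hm' hm i)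

lemma subCube_subset_of_not_disjoint (hl : 0 < l) {n k : ℕ} {m m' : Fin d → ℕ}
    (h : ¬Disjoint (subCube d a l n m) (subCube d a l (n + k) m')) :
    subCube d a l (n + k) m' ⊆ subCube d a l n m := by
  obtain ⟨x, hx, hx'⟩ := not_disjoint_iff.mp h
  obtain rfl := eq_of_mem_subCube hl hx (subCube_add_subset hl.le n k m' hx')
  exact subCube_add_subset hl.le n k m'

lemma pairwise_disjoint_subCube_of_maximal (hl : 0 < l) {ι : Type*}
    (q : ι → ℕ × (Fin d → ℕ))
    (hmax : ∀ i j, subCube d a l (q i).1 (q i).2 ⊆ subCube d a l (q j).1 (q j).2 → i = j) :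
    Pairwise (Disjoint on fun i => subCube d a l (q i).1 (q i).2) := by
  have key : ∀ i j, (q i).1 ≤ (q j).1 →
      ¬Disjoint (subCube d a l (q i).1 (q i).2) (subCube d a l (q j).1 (q j).2) → j = i := by
    intro i j hij h
    obtain ⟨k, hk⟩ := Nat.exists_eq_add_of_le hij
    rw [hk] at h
    exact hmax j i (hk ▸ subCube_subset_of_not_disjoint hl h)
  intro i j hij
  by_contra h
  rcases le_total (q i).1 (q j).1 with hle | hle
  · exact hij (key i j hle h).symm
  · exact hij (key j i hle (fun h' => h h'.symm))

lemma exists_subset_subCube_of_isMedian_child (hl : 0 ≤ l)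
    {f : (Fin d → ℝ) → ℝ} (hf : Measurable f) {n : ℕ} {m m' : Fin d → ℕ}
    (hm' : ∀ i, m' i / 2 = m i) {c : ℝ} (hc : IsMedian f (subCube d a l (n + 1) m') c)
    (b : ℝ) :
    ∃ E ⊆ subCube d a l n m, MeasurableSet E ∧
      volume (subCube d a l n m) ≤ 2 ^ (d + 1) * volume E ∧ ∀ x ∈ E, |c - b| ≤ |f x - b| := by
  have hchild : subCube d a l (n + 1) m' ⊆ subCube d a l n m := by
    simpa only [hm'] using subCube_succ_subset (a := a) hl n m'
  obtain ⟨E, hEQ', hE, hvol, habs⟩ := hc.exists_subset_abs_sub_le hf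
    (measurableSet_subCube _ _) (by rw [volume_subCube hl]; exact ofReal_ne_top) b
  refine ⟨E, hEQ'.trans hchild, hE, ?_, habs⟩
  rw [volume_subCube_eq_two_pow_mul hl n m m', pow_succ, mul_assoc]
  gcongr

end DyadicCubes

/-- if `med` assigns to each dyadic subcube of `Q⁰` a median of `f`, and
`{Q¹_j}` are the maximal dyadic subcubes of `Q⁰` such that some child `Q'` satisfies
`|m_f(Q') − m_f(Q⁰)| > (1_{Q⁰} f₀)*(λ|Q⁰|)` with `λ = 2^{−d−2}`, `f₀ = f − m_f(Q⁰)`,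
then `∑_j |Q¹_j| ≤ |Q⁰|/2`. -/
theorem stmt17 (d : ℕ) (a : Fin d → ℝ) (l : ℝ) (hl : 0 < l)
    (f : (Fin d → ℝ) → ℝ) (hf : Measurable f)
    (med : ℕ → (Fin d → ℕ) → ℝ)
    (hmed : ∀ n m, (∀ i, m i < 2 ^ n) → IsMedian f (subCube d a l n m) (med n m)) :
    let Q0 := subCube d a l 0 fun _ => 0
    let thr := rearr (Q0.indicator fun x => f x - med 0 fun _ => 0)
      (ENNReal.ofReal (1 / 2 ^ (d + 2)) * volume Q0)
    let S : Set (ℕ × (Fin d → ℕ)) :=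
      {q | (∀ i, q.2 i < 2 ^ q.1) ∧
        ∃ m' : Fin d → ℕ, (∀ i, m' i / 2 = q.2 i) ∧
          thr < ENNReal.ofReal |med (q.1 + 1) m' - med 0 fun _ => 0|}
    (∑' q : {q // q ∈ S ∧ ∀ r ∈ S,
          subCube d a l q.1 q.2 ⊆ subCube d a l r.1 r.2 → q = r},
        volume (subCube d a l q.1.1 q.1.2))
      ≤ volume Q0 / 2 := by
  intro Q0 thr S
  set c0 := med 0 fun _ => 0
  have hselected : ∀ q : {q // q ∈ S ∧ ∀ r ∈ S,
      subCube d a l q.1 q.2 ⊆ subCube d a l r.1 r.2 → q = r},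
      ∃ E ⊆ subCube d a l q.1.1 q.1.2, MeasurableSet E ∧
        volume (subCube d a l q.1.1 q.1.2) ≤ 2 ^ (d + 1) * volume E ∧
        E ⊆ {x | thr < ENNReal.ofReal |Q0.indicator (fun x => f x - c0) x|} := by
    rintro ⟨⟨n, m⟩, ⟨hm, m', hm', hthr⟩, -⟩
    have hm'lt : ∀ i, m' i < 2 ^ (n + 1) := fun i => by
      rw [pow_succ]; exact (Nat.div_lt_iff_lt_mul two_pos).mp ((hm' i).symm ▸ hm i)
    obtain ⟨E, hEQ, hE, hvol, habs⟩ :=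
      exists_subset_subCube_of_isMedian_child hl.le hf hm' (hmed (n + 1) m' hm'lt) c0
    refine ⟨E, hEQ, hE, hvol, fun x hx => ?_⟩
    show thr < _
    rw [indicator_of_mem (subCube_subset_subCube_zero hl.le hm (hEQ hx))]
    exact hthr.trans_le (ENNReal.ofReal_le_ofReal (habs x hx))
  choose E hEQ hE hvol hEbad using hselected
  calc _ ≤ 2 ^ (d + 1) * volume (⋃ q, E q) :=
        tsum_measure_le_mul_measure_iUnion (pairwise_disjoint_subCube_of_maximal hl _
          fun i j h => Subtype.ext (i.2.2 j.1 j.2.1 h)) hEQ hE hvol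
    _ ≤ 2 ^ (d + 1) * ((2 ^ (d + 2))⁻¹ * volume Q0) := by
        gcongr
        refine (measure_mono (iUnion_subset hEbad)).trans ((volume_rearr_lt_le _ _).trans_eq ?_)
        rw [one_div, ofReal_inv_of_pos (by positivity), ofReal_pow zero_le_two, ofReal_ofNat]
    _ = volume Q0 / 2 := by
        rw [pow_succ 2 (d + 1), ENNReal.mul_inv (by simp) (by simp), ← mul_assoc, ← mul_assoc,
          ENNReal.mul_inv_cancel (by simp) (by simp), one_mul, ENNReal.div_eq_inv_mul]
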